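/- Let n ≥ 1 and let F be an upset of a De Morgan lattice L. Then F is a consistent prime n-filter on L if and only if there exist k with 1 ≤ k ≤ n and a family G : Fin k → Set L such that each G i is a consistent prime filter on L and F = ⋃ i, G i. -/

import Mathlib

/-- A De Morgan lattice: a distributive lattice with an antitone involution. -/
class DeMorgan (L : Type*) extends DistribLattice L where
  dneg : L → L
  dneg_dneg : ∀ x : L, dneg (dneg x) = x
  dneg_sup : ∀ x y : L, dneg (x ⊔ y) = dneg x ⊓ dneg y

prefix:max "∼" => DeMorgan.dneg

section Defs

variable {α : Type*}

/-- An upward closed subset of a lattice. -/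
def IsUpset [Lattice α] (F : Set α) : Prop :=
  ∀ ⦃x y : α⦄, x ∈ F → x ≤ y → y ∈ F

/-- A lattice filter: an upset closed under binary meets. -/
def IsLatFilter [Lattice α] (F : Set α) : Prop :=
  IsUpset F ∧ ∀ x y : α, x ∈ F → y ∈ F → x ⊓ y ∈ F

/-- An `n`-filter: an upset such that for every nonempty finite `Y`, if the meet of
every nonempty subset of `Y` of size at most `n` lies in `F`, then so does the meet of `Y`. -/
def IsNFilter [Lattice α] (n : ℕ) (F : Set α) : Prop :=
  IsUpset F ∧ ∀ (Y : Finset α) (hY : Y.Nonempty),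
    (∀ (X : Finset α) (hX : X.Nonempty), X ⊆ Y → X.card ≤ n → X.inf' hX id ∈ F) →
    Y.inf' hY id ∈ F

/-- A prime upset: `x ⊔ y ∈ F` implies `x ∈ F` or `y ∈ F`. -/
def IsPrimeUpset [Lattice α] (F : Set α) : Prop :=
  ∀ x y : α, x ⊔ y ∈ F → x ∈ F ∨ y ∈ F

/-- A downward closed subset of a lattice. -/
def IsDownset [Lattice α] (I : Set α) : Prop :=
  ∀ ⦃x y : α⦄, x ∈ I → y ≤ x → y ∈ I

/-- A lattice ideal: a downset closed under binary joins. -/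
def IsIdeal [Lattice α] (I : Set α) : Prop :=
  IsDownset I ∧ ∀ x y : α, x ∈ I → y ∈ I → x ⊔ y ∈ I

/-- An `n`-ideal: the order dual notion of an `n`-filter. -/
def IsNIdeal [Lattice α] (n : ℕ) (I : Set α) : Prop :=
  IsDownset I ∧ ∀ (Y : Finset α) (hY : Y.Nonempty),
    (∀ (X : Finset α) (hX : X.Nonempty), X ⊆ Y → X.card ≤ n → X.sup' hX id ∈ I) →
    Y.sup' hY id ∈ I

variable {L : Type*} [DeMorgan L]

/-- Almost complete upset: `x ∈ F` implies `x ⊓ (y ⊔ ∼y) ∈ F`. -/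
def AlmostComplete (F : Set L) : Prop := ∀ x ∈ F, ∀ y : L, x ⊓ (y ⊔ ∼y) ∈ F

/-- Complete upset: almost complete and nonempty. -/
def IsCompleteUpset (F : Set L) : Prop := AlmostComplete F ∧ F.Nonempty

/-- Almost consistent upset: `(x ⊓ ∼x) ⊔ y ∈ F` implies `y ∈ F`. -/
def AlmostConsistent (F : Set L) : Prop := ∀ x y : L, (x ⊓ ∼x) ⊔ y ∈ F → y ∈ F

/-- Consistent upset: almost consistent and not total. -/
def IsConsistentUpset (F : Set L) : Prop := AlmostConsistent F ∧ F ≠ Set.univ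

/-- Classical upset: complete and consistent. -/
def IsClassicalUpset (F : Set L) : Prop := IsCompleteUpset F ∧ IsConsistentUpset F

/-- Kalman upset. -/
def IsKalmanUpset (F : Set L) : Prop :=
  ∀ x y z u : L, ((x ⊓ ∼x) ⊓ z) ⊔ u ∈ F → ((y ⊔ ∼y) ⊓ z) ⊔ u ∈ F

/-- A homomorphism of De Morgan lattices. -/
def IsDMHom {L M : Type*} [DeMorgan L] [DeMorgan M] (h : L → M) : Prop :=
  (∀ x y : L, h (x ⊓ y) = h x ⊓ h y) ∧ (∀ x y : L, h (x ⊔ y) = h x ⊔ h y) ∧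
    ∀ x : L, h (∼x) = ∼(h x)

/-- The filter generated by all elements of the form `x ⊔ ∼x`. -/
def Fcomp (L : Type*) [DeMorgan L] : Set L :=
  {a | ∃ (s : Finset L) (hs : s.Nonempty), s.inf' hs (fun x => x ⊔ ∼x) ≤ a}

/-- The `n`-filter generated by a set. -/
def nFilterGen (n : ℕ) (U : Set L) : Set L :=
  ⋂₀ {F : Set L | IsNFilter n F ∧ U ⊆ F}

/-- `Comp U`. -/
def CompCl (U : Set L) : Set L := {x | ∃ a ∈ U, ∃ f ∈ Fcomp L, a ⊓ f ≤ x}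

/-- `Cons U`. -/
def ConsCl (U : Set L) : Set L := {x | ∃ f ∈ Fcomp L, ∼f ⊔ x ∈ U}

/-- A congruence of De Morgan lattices, as a binary relation. -/
def IsCongruence (θ : L → L → Prop) : Prop :=
  Equivalence θ ∧
  (∀ a b c d : L, θ a b → θ c d → θ (a ⊓ c) (b ⊓ d)) ∧
  (∀ a b c d : L, θ a b → θ c d → θ (a ⊔ c) (b ⊔ d)) ∧
  ∀ a b : L, θ a b → θ (∼a) (∼b)

end Defs

/-- The four-element De Morgan lattice `DM₁` on `Bool × Bool`. -/
instance : DeMorgan (Bool × Bool) :=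
  { (inferInstance : DistribLattice (Bool × Bool)) with
    dneg := fun p => (!p.2, !p.1)
    dneg_dneg := by decide
    dneg_sup := by decide }

/-- Powers of `DM₁`, with componentwise operations. -/
instance {ι : Type*} : DeMorgan (ι → Bool × Bool) :=
  { (inferInstance : DistribLattice (ι → Bool × Bool)) with
    dneg := fun f i => ∼(f i)
    dneg_dneg := fun f => funext fun i => DeMorgan.dneg_dneg (f i)
    dneg_sup := fun f g => funext fun i => DeMorgan.dneg_sup (f i) (g i) }

/-!
A consistent prime `n`-filter `F` is the union of the filters that are maximal among the filters
contained in `F`: they are prime because `F` is, and the principal filter of any `x ∈ F` extends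
to one of them. There are at most `n` of them. Given `n + 1` distinct ones `P i`, primality gives
elements `c i` lying in every `P j` except `P i`, and maximality gives `p i ∈ P i` with
`p i ⊓ c i ∉ F`. The elements `c i ⊓ ⨆ j, p j` have every meet of at most `n` of them in some
`P j ⊆ F`, but their total meet distributes into a join of elements below the `p i ⊓ c i`, and
so is not in the prime upset `F`. Consistency passes from `F` to the prime filters inside it.

Conversely, if a finite set meets the complement of each of `k ≤ n` filters, then `k` of its
elements already witness this, so a union of at most `n` filters is an `n`-filter.
-/

lemma Set.finite_and_ncard_le_of_forall_finset_card_le {β : Type*} {s : Set β} {n : ℕ}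
    (h : ∀ t : Finset β, ↑t ⊆ s → t.card ≤ n) : s.Finite ∧ s.ncard ≤ n := by
  have hfin : s.Finite := Set.not_infinite.mp fun hinf => by
    obtain ⟨t, hts, htn⟩ := hinf.exists_subset_card_eq (n + 1)
    have := h t hts
    omega
  exact ⟨hfin, Set.ncard_eq_toFinset_card s hfin ▸ h _ (by simp)⟩

section Lattice

variable {α : Type*} [Lattice α]

lemma IsLatFilter.inf'_mem {G : Set α} (hG : IsLatFilter G) {ι : Type*} {s : Finset ι}
    (hs : s.Nonempty) {f : ι → α} (h : ∀ i ∈ s, f i ∈ G) : s.inf' hs f ∈ G :=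
  Finset.inf'_mem G (fun x hx y hy => hG.2 x y hx hy) s hs f h

lemma IsPrimeUpset.exists_mem_of_sup'_mem {P : Set α} (hP : IsPrimeUpset P) {ι : Type*}
    {s : Finset ι} (hs : s.Nonempty) {f : ι → α} (h : s.sup' hs f ∈ P) : ∃ i ∈ s, f i ∈ P := by
  induction hs using Finset.Nonempty.cons_induction with
  | singleton a => exact ⟨a, Finset.mem_singleton_self a, by simpa using h⟩
  | cons a s ha hs ih =>
      rw [Finset.sup'_cons hs] at h
      rcases hP _ _ h with h | h
      · exact ⟨a, Finset.mem_cons_self a s, h⟩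
      · obtain ⟨i, hi, hfi⟩ := ih h
        exact ⟨i, Finset.mem_cons_of_mem hi, hfi⟩

lemma IsPrimeUpset.exists_notMem_forall_mem {P : Set α} (hP : IsPrimeUpset P)
    {s : Finset (Set α)} (hs : s.Nonempty) (hup : ∀ Q ∈ s, IsUpset Q)
    (hnot : ∀ Q ∈ s, ¬Q ⊆ P) : ∃ x ∉ P, ∀ Q ∈ s, x ∈ Q := by
  obtain ⟨x₀, -⟩ := Set.not_subset.mp (hnot _ hs.choose_spec)
  have : Nonempty α := ⟨x₀⟩
  choose! g hgQ hgP using fun Q hQ => Set.not_subset.mp (hnot Q hQ)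
  refine ⟨s.sup' hs g, fun h => ?_, fun Q hQ => hup Q hQ (hgQ Q hQ) (Finset.le_sup' g hQ)⟩
  obtain ⟨Q, hQ, hgQP⟩ := hP.exists_mem_of_sup'_mem hs h
  exact hgP Q hQ hgQP

lemma IsNFilter.inf'_mem_of_separated {n : ℕ} {F : Set α} (hF : IsNFilter n F) {ι : Type*}
    {t : Finset ι} (ht : n < t.card) {Q : ι → Set α} (hQ : ∀ i ∈ t, IsLatFilter (Q i))
    (hQF : ∀ i ∈ t, Q i ⊆ F) {d : ι → α} (hdQ : ∀ i ∈ t, ∀ j ∈ t, i ≠ j → d i ∈ Q j)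
    (hd : ∀ i ∈ t, d i ∉ Q i) : t.inf' (Finset.card_pos.mp (by omega)) d ∈ F := by
  classical
  have hinj : Set.InjOn d t := fun i hi j hj hij => by
    by_contra hne
    exact hd j hj (hij ▸ hdQ i hi j hj hne)
  have hY := hF.2 (t.image d) ((Finset.card_pos.mp (by omega)).image d) fun X hX hXY hXn => by
    obtain ⟨i, hi, hiX⟩ : ∃ i ∈ t, d i ∉ X := by
      by_contra! hall
      have := Finset.card_le_card (Finset.image_subset_iff.mpr hall)
      rw [Finset.card_image_of_injOn hinj] at this
      omega
    refine hQF i hi ((hQ i hi).inf'_mem hX fun x hx => ?_)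
    obtain ⟨j, hj, rfl⟩ := Finset.mem_image.mp (hXY hx)
    exact hdQ j hj i hi (by rintro rfl; exact hiX hx)
  rwa [Finset.inf'_image] at hY

variable {ι : Type*} {G : ι → Set α}

lemma isUpset_iUnion (hG : ∀ i, IsUpset (G i)) : IsUpset (⋃ i, G i) := by
  intro x y hx hxy
  obtain ⟨i, hi⟩ := Set.mem_iUnion.mp hx
  exact Set.mem_iUnion.mpr ⟨i, hG i hi hxy⟩

lemma isPrimeUpset_iUnion (hG : ∀ i, IsPrimeUpset (G i)) : IsPrimeUpset (⋃ i, G i) := by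
  intro x y hxy
  obtain ⟨i, hi⟩ := Set.mem_iUnion.mp hxy
  exact (hG i x y hi).imp (Set.mem_iUnion_of_mem i) (Set.mem_iUnion_of_mem i)

lemma iUnion_ne_univ_of_isLatFilter [Fintype ι] [Nonempty ι] (hG : ∀ i, IsLatFilter (G i))
    (hne : ∀ i, G i ≠ Set.univ) : ⋃ i, G i ≠ Set.univ := by
  intro huniv
  choose b hb using fun i => (Set.ne_univ_iff_exists_notMem _).mp (hne i)
  obtain ⟨i, hi⟩ := Set.mem_iUnion.mp
    (huniv.symm ▸ Set.mem_univ (Finset.univ.inf' Finset.univ_nonempty b))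
  exact hb i ((hG i).1 hi (Finset.inf'_le b (Finset.mem_univ i)))

lemma isNFilter_iUnion [Fintype ι] [Nonempty ι] {n : ℕ} (hn : Fintype.card ι ≤ n)
    (hG : ∀ i, IsLatFilter (G i)) : IsNFilter n (⋃ i, G i) := by
  classical
  refine ⟨isUpset_iUnion fun i => (hG i).1, fun Y hY hsub => ?_⟩
  obtain ⟨i, hi⟩ : ∃ i, ∀ y ∈ Y, y ∈ G i := by
    by_contra! hno
    choose y hyY hyG using hno
    have hX := hsub (Finset.univ.image y) (Finset.univ_nonempty.image y)
      (Finset.image_subset_iff.mpr fun i _ => hyY i) (Finset.card_image_le.trans (by simpa))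
    obtain ⟨i, hi⟩ := Set.mem_iUnion.mp hX
    exact hyG i ((hG i).1 hi (Finset.inf'_le _ (Finset.mem_image_of_mem y (Finset.mem_univ i))))
  exact Set.mem_iUnion.mpr ⟨i, (hG i).inf'_mem hY hi⟩

end Lattice

section MaximalFilter

variable {α : Type*} [DistribLattice α] {F : Set α}

lemma isLatFilter_sUnion_of_isChain {c : Set (Set α)} (hc : ∀ G ∈ c, IsLatFilter G)
    (hchain : IsChain (· ⊆ ·) c) : IsLatFilter (⋃₀ c) := by
  refine ⟨?_, ?_⟩
  · rintro x y ⟨G, hG, hx⟩ hxy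
    exact ⟨G, hG, (hc G hG).1 hx hxy⟩
  · rintro x y ⟨G, hG, hx⟩ ⟨H, hH, hy⟩
    rcases hchain.total hG hH with hGH | hHG
    · exact ⟨H, hH, (hc H hH).2 x y (hGH hx) hy⟩
    · exact ⟨G, hG, (hc G hG).2 x y hx (hHG hy)⟩

lemma exists_maximal_filter_superset {G : Set α} (hG : IsLatFilter G) (hGF : G ⊆ F) :
    ∃ P, G ⊆ P ∧ Maximal (fun G => IsLatFilter G ∧ G ⊆ F) P :=
  zorn_subset_nonempty {P | IsLatFilter P ∧ P ⊆ F}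
    (fun c hcS hchain _ => ⟨⋃₀ c,
      ⟨isLatFilter_sUnion_of_isChain (fun _ hP => (hcS hP).1) hchain,
        Set.sUnion_subset fun _ hP => (hcS hP).2⟩,
      fun _ => Set.subset_sUnion_of_mem⟩)
    G ⟨hG, hGF⟩

lemma sUnion_maximal_filters (hF : IsUpset F) :
    ⋃₀ {P | Maximal (fun G => IsLatFilter G ∧ G ⊆ F) P} = F := by
  refine Set.Subset.antisymm (Set.sUnion_subset fun P hP => hP.1.2) fun x hx => ?_
  obtain ⟨P, hxP, hP⟩ := exists_maximal_filter_superset (G := Set.Ici x)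
    ⟨fun _ _ ha hab => le_trans ha hab, fun _ _ => le_inf⟩ fun _ ha => hF hx ha
  exact ⟨P, hP, hxP le_rfl⟩

variable {P : Set α}

lemma exists_inf_notMem_of_maximal (hF : IsUpset F)
    (hP : Maximal (fun G => IsLatFilter G ∧ G ⊆ F) P) (hPne : P.Nonempty) {c : α} (hc : c ∉ P) :
    ∃ p ∈ P, p ⊓ c ∉ F := by
  by_contra! h
  have hN : IsLatFilter {w | ∃ p ∈ P, p ⊓ c ≤ w} := by
    refine ⟨fun u v ⟨p, hp, hpu⟩ huv => ⟨p, hp, hpu.trans huv⟩, ?_⟩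
    rintro u v ⟨p, hp, hpu⟩ ⟨q, hq, hqv⟩
    refine ⟨p ⊓ q, hP.1.1.2 p q hp hq, le_inf ?_ ?_⟩
    · exact (inf_le_inf_right c inf_le_left).trans hpu
    · exact (inf_le_inf_right c inf_le_right).trans hqv
  have hPN := hP.eq_of_subset ⟨hN, fun w ⟨p, hp, hpw⟩ => hF (h p hp) hpw⟩
    fun p hp => ⟨p, hp, inf_le_left⟩
  obtain ⟨p, hp⟩ := hPne
  exact hc (hPN ▸ ⟨p, hp, inf_le_right⟩)

lemma isPrimeUpset_of_maximal (hF : IsUpset F) (hFp : IsPrimeUpset F)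
    (hP : Maximal (fun G => IsLatFilter G ∧ G ⊆ F) P) : IsPrimeUpset P := by
  intro x y hxy
  by_contra! hxy'
  obtain ⟨p, hp, hpx⟩ := exists_inf_notMem_of_maximal hF hP ⟨_, hxy⟩ hxy'.1
  obtain ⟨q, hq, hqy⟩ := exists_inf_notMem_of_maximal hF hP ⟨_, hxy⟩ hxy'.2
  have hpq : p ⊓ q ⊓ x ⊔ p ⊓ q ⊓ y ∈ F := by
    rw [← inf_sup_left]
    exact hP.1.2 (hP.1.1.2 _ _ (hP.1.1.2 p q hp hq) hxy)
  rcases hFp _ _ hpq with h | h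
  · exact hpx (hF h (inf_le_inf_right x inf_le_left))
  · exact hqy (hF h (inf_le_inf_right y inf_le_right))

lemma exists_separating_of_maximal_filters (hF : IsUpset F) (hFp : IsPrimeUpset F)
    {t : Finset (Set α)} (ht : t.Nontrivial)
    (hmax : ∀ P ∈ t, Maximal (fun G => IsLatFilter G ∧ G ⊆ F) P) :
    ∃ d : Set α → α, (∀ P ∈ t, ∀ Q ∈ t, P ≠ Q → d P ∈ Q) ∧ (∀ P ∈ t, d P ∉ P) ∧
      t.inf' ht.nonempty d ∉ F := by
  classical
  have hsep : ∀ P ∈ t, ∃ c ∉ P, ∀ Q ∈ t.erase P, c ∈ Q := fun P hP =>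
    (isPrimeUpset_of_maximal hF hFp (hmax P hP)).exists_notMem_forall_mem ht.erase_nonempty
      (fun Q hQ => (hmax Q (Finset.mem_of_mem_erase hQ)).1.1.1) fun Q hQ hQP =>
        (Finset.mem_erase.mp hQ).1
          ((hmax Q (Finset.mem_of_mem_erase hQ)).eq_of_subset (hmax P hP).1 hQP)
  obtain ⟨P₀, hP₀⟩ := ht.nonempty
  have : Nonempty α := ⟨(hsep P₀ hP₀).choose⟩
  choose! c hcP hcQ using hsep
  have hesc : ∀ P ∈ t, ∃ p ∈ P, p ⊓ c P ∉ F := fun P hP => by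
    obtain ⟨Q, hQ⟩ := ht.erase_nonempty (a := P)
    obtain ⟨hQP, hQt⟩ := Finset.mem_erase.mp hQ
    exact exists_inf_notMem_of_maximal hF (hmax P hP)
      ⟨c Q, hcQ Q hQt P (Finset.mem_erase.mpr ⟨Ne.symm hQP, hP⟩)⟩ (hcP P hP)
  choose! p hpP hpF using hesc
  set s := t.sup' ht.nonempty p
  refine ⟨fun P => c P ⊓ s, fun P hP Q hQ hPQ => ?_, fun P hP h => ?_, fun hz => ?_⟩
  · exact (hmax Q hQ).1.1.2 _ _ (hcQ P hP Q (Finset.mem_erase.mpr ⟨hPQ.symm, hQ⟩))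
      ((hmax Q hQ).1.1.1 (hpP Q hQ) (Finset.le_sup' p hQ))
  · exact hcP P hP ((hmax P hP).1.1.1 h inf_le_left)
  · set z := t.inf' ht.nonempty fun P => c P ⊓ s
    have hzs : z ≤ s := (Finset.inf'_le _ hP₀).trans inf_le_right
    have hzp : t.sup' ht.nonempty (fun Q => z ⊓ p Q) ∈ F := by
      rwa [← Finset.sup'_inf_distrib_left, inf_eq_left.mpr hzs]
    obtain ⟨Q, hQ, hzQ⟩ := hFp.exists_mem_of_sup'_mem _ hzp
    exact hpF Q hQ (hF hzQ (le_inf inf_le_right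
      (inf_le_left.trans ((Finset.inf'_le _ hQ).trans inf_le_left))))

lemma card_le_of_forall_maximal_filter {n : ℕ} (hn : 1 ≤ n) (hFp : IsPrimeUpset F)
    (hFn : IsNFilter n F) {t : Finset (Set α)}
    (hmax : ∀ P ∈ t, Maximal (fun G => IsLatFilter G ∧ G ⊆ F) P) : t.card ≤ n := by
  by_contra! hnt
  have ht : t.Nontrivial := Finset.one_lt_card_iff_nontrivial.mp (by omega)
  obtain ⟨d, hdQ, hd, hdF⟩ := exists_separating_of_maximal_filters hFn.1 hFp ht hmax
  exact hdF (hFn.inf'_mem_of_separated hnt (Q := id) (fun P hP => (hmax P hP).1.1)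
    (fun P hP => (hmax P hP).1.2) hdQ hd)

end MaximalFilter

section Consistency

variable {L : Type*} [DeMorgan L]

lemma IsConsistentUpset.of_subset_of_isPrimeUpset {F P : Set L} (hF : IsConsistentUpset F)
    (hFup : IsUpset F) (hP : IsPrimeUpset P) (hPF : P ⊆ F) : IsConsistentUpset P := by
  refine ⟨fun x y hxy => (hP _ _ hxy).resolve_left fun hx => hF.2 ?_, fun h => hF.2 ?_⟩
  · exact Set.eq_univ_of_forall fun z => hF.1 x z (hFup (hPF hx) le_sup_left)
  · exact Set.eq_univ_of_univ_subset (h ▸ hPF)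

lemma isConsistentUpset_iUnion {ι : Type*} [Fintype ι] [Nonempty ι] {G : ι → Set L}
    (hG : ∀ i, IsConsistentUpset (G i)) (hGf : ∀ i, IsLatFilter (G i)) :
    IsConsistentUpset (⋃ i, G i) := by
  refine ⟨fun x y hxy => ?_, iUnion_ne_univ_of_isLatFilter hGf fun i => (hG i).2⟩
  obtain ⟨i, hi⟩ := Set.mem_iUnion.mp hxy
  exact Set.mem_iUnion.mpr ⟨i, (hG i).1 x y hi⟩

end Consistency

theorem statement2 {L : Type*} [DeMorgan L] (n : ℕ) (hn : 1 ≤ n)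
    (F : Set L) :
    (IsConsistentUpset F ∧ IsPrimeUpset F ∧ IsNFilter n F) ↔
      ∃ k : ℕ, 1 ≤ k ∧ k ≤ n ∧ ∃ G : Fin k → Set L,
        (∀ i : Fin k, IsConsistentUpset (G i) ∧ IsPrimeUpset (G i) ∧ IsLatFilter (G i)) ∧
        F = ⋃ i : Fin k, G i := by
  constructor
  · rintro ⟨hFc, hFp, hFn⟩
    set M := {P | Maximal (fun G => IsLatFilter G ∧ G ⊆ F) P}
    obtain ⟨hfin, hcard⟩ := Set.finite_and_ncard_le_of_forall_finset_card_le
      fun t ht => card_le_of_forall_maximal_filter hn hFp hFn fun P hP => ht hP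
    obtain ⟨P₀, -, hP₀⟩ := exists_maximal_filter_superset (F := F) ⟨fun _ _ h => h.elim,
      fun _ _ h => h.elim⟩ (Set.empty_subset F)
    have : Finite M := hfin
    have : Nonempty M := ⟨⟨P₀, hP₀⟩⟩
    let e := Finite.equivFin M
    refine ⟨Nat.card M, Nat.card_pos, hcard, fun i => e.symm i, fun i => ?_, ?_⟩
    · have hP := (e.symm i).2
      have hPp := isPrimeUpset_of_maximal hFn.1 hFp hP
      exact ⟨hFc.of_subset_of_isPrimeUpset hFn.1 hPp hP.1.2, hPp, hP.1.1⟩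
    · rw [e.symm.surjective.iUnion_comp (fun P : M => (P : Set L)), ← Set.sUnion_eq_iUnion,
        sUnion_maximal_filters hFn.1]
  · rintro ⟨k, hk, hkn, G, hG, rfl⟩
    have : Nonempty (Fin k) := ⟨⟨0, hk⟩⟩
    exact ⟨isConsistentUpset_iUnion (fun i => (hG i).1) (fun i => (hG i).2.2),
      isPrimeUpset_iUnion fun i => (hG i).2.1,
      isNFilter_iUnion (by simpa using hkn) fun i => (hG i).2.2⟩
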